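/- In every orthomodular lattice L, equation E₂ holds: for all a₁, b₁, a₂, b₂ ∈ L, if a₁ ⊥ b₁, a₂ ⊥ b₂, and a₁ ⊥ a₂, then (a₁ ∪ a₂) ∩ (a₁ ∪ b₁) ∩ (a₂ ∪ b₂) ≤ b₁ ∪ b₂. -/
import Mathlib


/-- An ortholattice: a bounded lattice with an orthocomplementation. -/
class Ortholattice (α : Type*) extends Lattice α, BoundedOrder α where
  ocompl : α → α
  sup_ocompl : ∀ a : α, a ⊔ ocompl a = ⊤
  inf_ocompl : ∀ a : α, a ⊓ ocompl a = ⊥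
  ocompl_anti : ∀ a b : α, a ≤ b → ocompl b ≤ ocompl a
  ocompl_ocompl : ∀ a : α, ocompl (ocompl a) = a

postfix:max "ᗮ" => Ortholattice.ocompl

/-- An orthomodular lattice. -/
class OrthomodularLattice (α : Type*) extends Ortholattice α where
  orthomodular : ∀ a b : α, a ≤ b → b = a ⊔ (aᗮ ⊓ b)

section OMLAux

variable {α : Type*} [OrthomodularLattice α]

lemma ocompl_anti' {a b : α} (h : a ≤ b) : bᗮ ≤ aᗮ := Ortholattice.ocompl_anti a b h

lemma le_ocompl_comm {a b : α} (h : a ≤ bᗮ) : b ≤ aᗮ := by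
  have := ocompl_anti' h
  rwa [Ortholattice.ocompl_ocompl] at this

lemma inf_ocompl' (a : α) : a ⊓ aᗮ = ⊥ := Ortholattice.inf_ocompl a

lemma ocompl_sup (a b : α) : (a ⊔ b)ᗮ = aᗮ ⊓ bᗮ := by
  apply le_antisymm
  · exact le_inf (ocompl_anti' le_sup_left) (ocompl_anti' le_sup_right)
  · apply le_ocompl_comm
    apply sup_le
    · exact le_ocompl_comm inf_le_left
    · exact le_ocompl_comm inf_le_right

lemma ocompl_inf (a b : α) : (a ⊓ b)ᗮ = aᗮ ⊔ bᗮ := by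
  have := ocompl_sup aᗮ bᗮ
  rw [Ortholattice.ocompl_ocompl, Ortholattice.ocompl_ocompl] at this
  rw [← this, Ortholattice.ocompl_ocompl]

/-- Commutation relation -/
def OCommute (a b : α) : Prop := a = (a ⊓ b) ⊔ (a ⊓ bᗮ)

lemma oCommute_of_ge {a b : α} (h : b ≤ a) : OCommute a b := by
  unfold OCommute
  rw [inf_eq_right.mpr h, inf_comm]
  exact OrthomodularLattice.orthomodular b a h

lemma oCommute_of_orth {a b : α} (h : a ≤ bᗮ) : OCommute a b := by
  unfold OCommute
  rw [inf_eq_left.mpr h]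
  exact (sup_eq_right.mpr inf_le_left).symm

lemma oCommute_compl_compl_of_orth {a b : α} (h : a ≤ bᗮ) : OCommute aᗮ bᗮ := by
  unfold OCommute
  rw [Ortholattice.ocompl_ocompl]
  have hb : b ≤ aᗮ := le_ocompl_comm h
  rw [inf_eq_right.mpr hb, sup_comm, inf_comm]
  exact OrthomodularLattice.orthomodular b aᗮ hb

lemma inf_ocompl_inf {a b : α} (h : OCommute a b) : a ⊓ (a ⊓ b)ᗮ = a ⊓ bᗮ := by
  have hle : a ⊓ bᗮ ≤ a ⊓ (a ⊓ b)ᗮ :=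
    inf_le_inf_left a (ocompl_anti' inf_le_right)
  have hom := OrthomodularLattice.orthomodular _ _ hle
  have he : (a ⊓ bᗮ)ᗮ ⊓ (a ⊓ (a ⊓ b)ᗮ) = ⊥ := by
    apply le_bot_iff.mp
    have h1 : (a ⊓ bᗮ)ᗮ ⊓ (a ⊓ (a ⊓ b)ᗮ) ≤ aᗮ := by
      have : (a ⊓ bᗮ)ᗮ ⊓ (a ⊓ (a ⊓ b)ᗮ) ≤ (a ⊓ b)ᗮ ⊓ (a ⊓ bᗮ)ᗮ := by
        apply le_inf
        · exact le_trans inf_le_right inf_le_right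
        · exact inf_le_left
      rw [← ocompl_sup] at this
      rw [← h] at this
      exact this
    have h2 : (a ⊓ bᗮ)ᗮ ⊓ (a ⊓ (a ⊓ b)ᗮ) ≤ a := le_trans inf_le_right inf_le_left
    calc (a ⊓ bᗮ)ᗮ ⊓ (a ⊓ (a ⊓ b)ᗮ) ≤ a ⊓ aᗮ := le_inf h2 h1
    _ = ⊥ := inf_ocompl' a
  rw [he, sup_bot_eq] at hom
  exact hom

/-- Foulis–Holland instance: if `a` commutes with `b` and `c` then
`a ⊓ (b ⊔ c) = (a ⊓ b) ⊔ (a ⊓ c)`. -/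
lemma FH_inf_sup {a b c : α} (hb : OCommute a b) (hc : OCommute a c) :
    a ⊓ (b ⊔ c) = (a ⊓ b) ⊔ (a ⊓ c) := by
  have hle : (a ⊓ b) ⊔ (a ⊓ c) ≤ a ⊓ (b ⊔ c) :=
    sup_le (inf_le_inf_left a le_sup_left) (inf_le_inf_left a le_sup_right)
  have hom := OrthomodularLattice.orthomodular _ _ hle
  have hd : ((a ⊓ b) ⊔ (a ⊓ c))ᗮ ⊓ (a ⊓ (b ⊔ c)) = ⊥ := by
    apply le_bot_iff.mp
    set d := ((a ⊓ b) ⊔ (a ⊓ c))ᗮ ⊓ (a ⊓ (b ⊔ c)) with hdd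
    have hda : d ≤ a := le_trans inf_le_right inf_le_left
    have hdbc : d ≤ b ⊔ c := le_trans inf_le_right inf_le_right
    have hdb' : d ≤ bᗮ := by
      have : d ≤ a ⊓ (a ⊓ b)ᗮ := by
        apply le_inf hda
        exact le_trans inf_le_left (by rw [ocompl_sup]; exact inf_le_left)
      rw [inf_ocompl_inf hb] at this
      exact le_trans this inf_le_right
    have hdc' : d ≤ cᗮ := by
      have : d ≤ a ⊓ (a ⊓ c)ᗮ := by
        apply le_inf hda
        exact le_trans inf_le_left (by rw [ocompl_sup]; exact inf_le_right)
      rw [inf_ocompl_inf hc] at this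
      exact le_trans this inf_le_right
    have : d ≤ (b ⊔ c) ⊓ (b ⊔ c)ᗮ := by
      apply le_inf hdbc
      rw [ocompl_sup]
      exact le_inf hdb' hdc'
    rwa [inf_ocompl'] at this
  rw [hd, sup_bot_eq] at hom
  exact hom

end OMLAux

/-- The Sasaki hook `x → y = x′ ∪ (x ∩ y)`. -/
def oimp {α : Type*} [Ortholattice α] (x y : α) : α := xᗮ ⊔ (x ⊓ y)

theorem E2_holds {α : Type*} [OrthomodularLattice α]
    (a₁ b₁ a₂ b₂ : α)
    (h1 : a₁ ≤ b₁ᗮ) (h2 : a₂ ≤ b₂ᗮ) (h3 : a₁ ≤ a₂ᗮ) :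
    (a₁ ⊔ a₂) ⊓ (a₁ ⊔ b₁) ⊓ (a₂ ⊔ b₂) ≤ b₁ ⊔ b₂ := by
  -- Notation
  set t := a₂ ⊓ b₁ with ht
  set z := a₂ ⊔ b₂ with hz
  have hb1a1 : b₁ ≤ a₁ᗮ := le_ocompl_comm h1
  have hb2a2 : b₂ ≤ a₂ᗮ := le_ocompl_comm h2
  have ha2a1 : a₂ ≤ a₁ᗮ := le_ocompl_comm h3
  -- Step A : (a₁ ⊔ a₂) ⊓ (a₁ ⊔ b₁) = a₁ ⊔ t
  have stepA : (a₁ ⊔ a₂) ⊓ (a₁ ⊔ b₁) = a₁ ⊔ t := by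
    have hC1 : OCommute a₁ᗮ a₂ᗮ := oCommute_compl_compl_of_orth h3
    have hC2 : OCommute a₁ᗮ b₁ᗮ := oCommute_compl_compl_of_orth h1
    have := FH_inf_sup hC1 hC2
    have h' := congrArg Ortholattice.ocompl this
    simp only [ocompl_inf, ocompl_sup, Ortholattice.ocompl_ocompl] at h'
    rw [ht, h']
  -- Step C : a₁ ⊓ z ≤ b₂
  have stepC : a₁ ⊓ z ≤ b₂ := by
    have hC1 : OCommute a₂ᗮ a₂ := oCommute_of_orth (le_refl _)
    have hC2 : OCommute a₂ᗮ b₂ := oCommute_of_ge hb2a2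
    have hfh : a₂ᗮ ⊓ (a₂ ⊔ b₂) = (a₂ᗮ ⊓ a₂) ⊔ (a₂ᗮ ⊓ b₂) := FH_inf_sup hC1 hC2
    have hzero : a₂ᗮ ⊓ a₂ = ⊥ := by rw [inf_comm]; exact inf_ocompl' a₂
    rw [hzero, bot_sup_eq] at hfh
    calc a₁ ⊓ z ≤ a₂ᗮ ⊓ (a₂ ⊔ b₂) := inf_le_inf h3 (le_refl _)
    _ = a₂ᗮ ⊓ b₂ := hfh
    _ ≤ b₂ := inf_le_right
  -- facts about t
  have hta2 : t ≤ a₂ := inf_le_left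
  have htb1 : t ≤ b₁ := inf_le_right
  have htz : t ≤ z := le_trans hta2 le_sup_left
  have ha1t : a₁ ≤ tᗮ := le_ocompl_comm (le_trans hta2 ha2a1)
  -- key sub-step : tᗮ ⊓ (a₁ ⊔ t) = a₁
  have hsub : tᗮ ⊓ (a₁ ⊔ t) = a₁ := by
    have hC1 : OCommute tᗮ a₁ := oCommute_of_ge ha1t
    have hC2 : OCommute tᗮ t := oCommute_of_orth (le_refl _)
    rw [FH_inf_sup hC1 hC2, inf_eq_right.mpr ha1t]
    rw [inf_comm, inf_ocompl', sup_bot_eq]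
  -- Step B : (a₁ ⊔ t) ⊓ z = (a₁ ⊓ z) ⊔ t
  have stepB : (a₁ ⊔ t) ⊓ z = (a₁ ⊓ z) ⊔ t := by
    have hyx : (a₁ ⊓ z) ⊔ t ≤ (a₁ ⊔ t) ⊓ z := by
      apply sup_le
      · exact inf_le_inf le_sup_left (le_refl _)
      · exact le_inf le_sup_right htz
    have hom := OrthomodularLattice.orthomodular _ _ hyx
    have hd : ((a₁ ⊓ z) ⊔ t)ᗮ ⊓ ((a₁ ⊔ t) ⊓ z) = ⊥ := by
      apply le_bot_iff.mp
      set d := ((a₁ ⊓ z) ⊔ t)ᗮ ⊓ ((a₁ ⊔ t) ⊓ z) with hdd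
      have hd1 : d ≤ (a₁ ⊓ z)ᗮ := le_trans inf_le_left (by rw [ocompl_sup]; exact inf_le_left)
      have hd2 : d ≤ tᗮ := le_trans inf_le_left (by rw [ocompl_sup]; exact inf_le_right)
      have hd3 : d ≤ a₁ := by
        have : d ≤ tᗮ ⊓ (a₁ ⊔ t) := le_inf hd2 (le_trans inf_le_right inf_le_left)
        rwa [hsub] at this
      have hd4 : d ≤ z := le_trans inf_le_right inf_le_right
      have : d ≤ (a₁ ⊓ z) ⊓ (a₁ ⊓ z)ᗮ := le_inf (le_inf hd3 hd4) hd1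
      rwa [inf_ocompl'] at this
    rw [hd, sup_bot_eq] at hom
    exact hom
  calc (a₁ ⊔ a₂) ⊓ (a₁ ⊔ b₁) ⊓ (a₂ ⊔ b₂) = (a₁ ⊔ t) ⊓ z := by rw [stepA]
  _ = (a₁ ⊓ z) ⊔ t := stepB
  _ ≤ b₂ ⊔ b₁ := sup_le (le_trans stepC le_sup_left) (le_trans htb1 le_sup_right)
  _ = b₁ ⊔ b₂ := sup_comm _ _
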